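/- Assume f satisfies (f1) and (f2) with constant B ∈ [1,∞). Then: (i) 1/B₁[f](s) → 1/B as s → ∞; (ii) there exists s₁ > s₀ such that f'(s)·F(s) ≤ 1 for all s ≥ s₁, and consequently the function s ↦ f(s)·F(s) is non-increasing on [s₁,∞); moreover f'(s)·F(s) → 1 as s → ∞. -/

import Mathlib

open MeasureTheory Filter

/-- `Fint f s = ∫_s^∞ dτ / f(τ)`. -/
noncomputable def Fint (f : ℝ → ℝ) (s : ℝ) : ℝ := ∫ τ in Set.Ioi s, 1 / f τ

/-- `1/B₁[f](s) = (−log F(s))·(1 − f'(s)·F(s))`, with `G` playing the role of `F`. -/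
noncomputable def invB1 (f G : ℝ → ℝ) (s : ℝ) : ℝ :=
  (-Real.log (G s)) * (1 - deriv f s * G s)

/-- `1/B₂[f](s) = f'(s)·F(s)·(log F(s))²·(f(s)·f''(s)·F(s)/f'(s) − 1)`,
with `G` playing the role of `F`. -/
noncomputable def invB2 (f G : ℝ → ℝ) (s : ℝ) : ℝ :=
  deriv f s * G s * (Real.log (G s)) ^ 2 *
    (f s * deriv (deriv f) s * G s / deriv f s - 1)

/-- The model singular solution `v`. -/
noncomputable def modelv (B t : ℝ) : ℝ :=
  if B = 1 then Real.log (-2 * Real.log t) else (-2 * Real.log t) ^ ((B - 1) / B)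

/-- The model nonlinearity `g`. -/
noncomputable def modelg (B s : ℝ) : ℝ :=
  if B = 1 then 4 * Real.exp (Real.exp s - 2 * s)
  else (4 / (B * (B / (B - 1)))) * s ^ (1 - 2 * (B / (B - 1))) * Real.exp (s ^ (B / (B - 1)))

/-- The model function `G(s) = ∫_s^∞ dτ/g(τ)` in closed form. -/
noncomputable def modelG (B s : ℝ) : ℝ :=
  if B = 1 then (1 / 4) * (Real.exp s + 1) * Real.exp (-Real.exp s)
  else (B / 4) * (s ^ (B / (B - 1)) + 1) * Real.exp (-(s ^ (B / (B - 1))))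

/-- The Emden–Fowler model profile `ψ`. -/
noncomputable def modelpsi (B ρ : ℝ) : ℝ :=
  if B = 1 then Real.log (ρ - 1) else (ρ - 1) ^ ((B - 1) / B)

/-!
Since `F' = -1/f` and `F ↓ 0`, the quantity `1/B₁ = (1 - f'F) / (-log F)⁻¹` is a `0/0` quotient,
and the quotient of the derivatives of numerator and denominator is exactly `1/B₂`; L'Hôpital's
rule gives (i). For (ii), `(f'F)' = (f f'' F - f') / f` has the sign of `1/B₂`, which is
eventually positive because `1/B₂ → 1/B > 0`. So `f'F` eventually increases to its limit `1`,
hence stays `≤ 1`, and then `(fF)' = f'F - 1 ≤ 0`.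
-/

open Set Topology

section TailIntegral

variable {g : ℝ → ℝ} {a s : ℝ}

theorem hasDerivAt_setIntegral_Ioi (hg : IntegrableOn g (Ioi a)) (has : a < s)
    (hc : ContinuousAt g s) : HasDerivAt (fun t => ∫ τ in Ioi t, g τ) (-g s) s := by
  have hint : IntervalIntegrable g volume a s :=
    (intervalIntegrable_iff_integrableOn_Ioc_of_le has.le).mpr (hg.mono_set Ioc_subset_Ioi_self)
  have hmeas : StronglyMeasurableAtFilter g (𝓝 s) :=
    AEStronglyMeasurable.stronglyMeasurableAtFilter_of_mem hg.aestronglyMeasurable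
      (Ioi_mem_nhds has)
  have hd := (intervalIntegral.integral_hasDerivAt_right hint hmeas hc).const_sub
    (∫ τ in Ioi a, g τ)
  refine hd.congr_of_eventuallyEq ?_
  filter_upwards [Ioi_mem_nhds has] with t ht
  rw [← intervalIntegral.integral_Ioi_sub_Ioi hg ht.le, sub_sub_cancel]

theorem setIntegral_Ioi_pos (hg : IntegrableOn g (Ioi s)) (hpos : ∀ τ, s < τ → 0 < g τ) :
    0 < ∫ τ in Ioi s, g τ := by
  rw [setIntegral_pos_iff_support_of_nonneg_ae
    ((ae_restrict_iff' measurableSet_Ioi).mpr (ae_of_all _ fun τ hτ => (hpos τ hτ).le)) hg]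
  have hsub : Ioi s ⊆ Function.support g ∩ Ioi s := fun τ hτ => ⟨(hpos τ hτ).ne', hτ⟩
  refine lt_of_lt_of_le ?_ (measure_mono hsub)
  simp

end TailIntegral

section InvB

variable {f G : ℝ → ℝ} {s : ℝ}

theorem deriv_ne_zero_of_invB2_ne_zero (h : invB2 f G s ≠ 0) : deriv f s ≠ 0 := by
  contrapose! h
  simp [invB2, h]

theorem invB2_eq (hf' : deriv f s ≠ 0) :
    invB2 f G s = G s * Real.log (G s) ^ 2 * (f s * deriv (deriv f) s * G s - deriv f s) := by
  rw [invB2]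
  field_simp

theorem sub_pos_of_invB2_pos (hG : 0 < G s) (h : 0 < invB2 f G s) :
    0 < f s * deriv (deriv f) s * G s - deriv f s := by
  rw [invB2_eq (deriv_ne_zero_of_invB2_ne_zero h.ne')] at h
  exact pos_of_mul_pos_right h (by positivity)

theorem hasDerivAt_deriv_mul (hf'' : HasDerivAt (deriv f) (deriv (deriv f) s) s)
    (hG : HasDerivAt G (-(1 / f s)) s) (hf : f s ≠ 0) :
    HasDerivAt (fun t => deriv f t * G t)
      ((f s * deriv (deriv f) s * G s - deriv f s) / f s) s := by
  refine (hf''.mul hG).congr_deriv ?_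
  field_simp
  ring

theorem hasDerivAt_inv_neg_log (hG : HasDerivAt G (-(1 / f s)) s) (hGpos : 0 < G s)
    (hlog : Real.log (G s) ≠ 0) :
    HasDerivAt (fun t => (-Real.log (G t))⁻¹) (-(1 / (f s * G s * Real.log (G s) ^ 2))) s := by
  refine (((hG.log hGpos.ne').neg).inv (neg_ne_zero.mpr hlog)).congr_deriv ?_
  simp only [Pi.neg_apply, neg_sq]
  field_simp

theorem tendsto_invB1_of_tendsto_invB2 {L : ℝ}
    (hG : ∀ᶠ s in atTop, HasDerivAt G (-(1 / f s)) s) (hG0 : Tendsto G atTop (𝓝[>] 0))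
    (hf'' : ∀ᶠ s in atTop, HasDerivAt (deriv f) (deriv (deriv f) s) s)
    (hf : ∀ᶠ s in atTop, f s ≠ 0) (hf' : ∀ᶠ s in atTop, deriv f s ≠ 0)
    (h1 : Tendsto (fun s => deriv f s * G s) atTop (𝓝 1))
    (h2 : Tendsto (invB2 f G) atTop (𝓝 L)) : Tendsto (invB1 f G) atTop (𝓝 L) := by
  obtain ⟨hG0', hGpos⟩ := tendsto_nhdsWithin_iff.mp hG0
  have hlog : ∀ᶠ s in atTop, Real.log (G s) < 0 := by
    filter_upwards [hGpos, hG0'.eventually_lt_const one_pos] with s hpos hlt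
    exact Real.log_neg hpos hlt
  have hnum : Tendsto (fun s => 1 - deriv f s * G s) atTop (𝓝 0) := by
    simpa using h1.const_sub 1
  have hden : Tendsto (fun s => (-Real.log (G s))⁻¹) atTop (𝓝 0) :=
    tendsto_inv_atTop_zero.comp
      (tendsto_neg_atBot_atTop.comp (Real.tendsto_log_nhdsGT_zero.comp hG0))
  have hnum' : ∀ᶠ s in atTop, HasDerivAt (fun t => 1 - deriv f t * G t)
      (-((f s * deriv (deriv f) s * G s - deriv f s) / f s)) s := by
    filter_upwards [hG, hf'', hf] with s hGs hf''s hfs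
    exact (hasDerivAt_deriv_mul hf''s hGs hfs).const_sub 1
  have hden' : ∀ᶠ s in atTop, HasDerivAt (fun t => (-Real.log (G t))⁻¹)
      (-(1 / (f s * G s * Real.log (G s) ^ 2))) s := by
    filter_upwards [hG, hGpos, hlog] with s hGs hpos hlogs
    exact hasDerivAt_inv_neg_log hGs hpos hlogs.ne
  have hden'_ne : ∀ᶠ s in atTop, -(1 / (f s * G s * Real.log (G s) ^ 2)) ≠ 0 := by
    filter_upwards [hGpos, hlog, hf] with s hpos hlogs hfs
    exact neg_ne_zero.mpr (one_div_ne_zero (mul_ne_zero (mul_ne_zero hfs hpos.out.ne')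
      (pow_ne_zero 2 hlogs.ne)))
  have hratio : invB2 f G =ᶠ[atTop] fun s => -((f s * deriv (deriv f) s * G s - deriv f s) / f s)
      / -(1 / (f s * G s * Real.log (G s) ^ 2)) := by
    filter_upwards [hGpos, hlog, hf, hf'] with s hpos hlogs hfs hf's
    have hlog0 := hlogs.ne
    rw [invB2_eq hf's]
    field_simp
  refine (HasDerivAt.lhopital_zero_atTop hnum' hden' hden'_ne hnum hden
    (h2.congr' hratio)).congr fun s => ?_
  rw [invB1, div_inv_eq_mul, mul_comm]

end InvB

section Monotonicity

variable {f f' G : ℝ → ℝ} {D : Set ℝ}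

theorem strictMonoOn_deriv_mul_of_invB2_pos (hD : Convex ℝ D)
    (hf'' : ∀ s ∈ D, HasDerivAt (deriv f) (deriv (deriv f) s) s)
    (hG : ∀ s ∈ D, HasDerivAt G (-(1 / f s)) s) (hf : ∀ s ∈ D, 0 < f s)
    (hGpos : ∀ s ∈ D, 0 < G s) (hB2 : ∀ s ∈ D, 0 < invB2 f G s) :
    StrictMonoOn (fun s => deriv f s * G s) D := by
  have hd (s) (hs : s ∈ D) := hasDerivAt_deriv_mul (hf'' s hs) (hG s hs) (hf s hs).ne'
  refine strictMonoOn_of_deriv_pos hD (fun s hs => (hd s hs).continuousAt.continuousWithinAt)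
    fun s hs => ?_
  have hs' := interior_subset hs
  rw [(hd s hs').deriv]
  exact div_pos (sub_pos_of_invB2_pos (hGpos s hs') (hB2 s hs')) (hf s hs')

theorem antitoneOn_mul_of_deriv_mul_le_one (hD : Convex ℝ D)
    (hf : ∀ s ∈ D, HasDerivAt f (f' s) s) (hG : ∀ s ∈ D, HasDerivAt G (-(1 / f s)) s)
    (hfne : ∀ s ∈ D, f s ≠ 0) (hle : ∀ s ∈ D, f' s * G s ≤ 1) :
    AntitoneOn (fun s => f s * G s) D := by
  have hd (s) (hs : s ∈ D) : HasDerivAt (fun t => f t * G t) (f' s * G s - 1) s :=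
    ((hf s hs).mul (hG s hs)).congr_deriv (by field_simp [hfne s hs]; ring)
  refine antitoneOn_of_deriv_nonpos hD (fun s hs => (hd s hs).continuousAt.continuousWithinAt)
    (fun s hs => (hd s (interior_subset hs)).differentiableAt.differentiableWithinAt)
    fun s hs => ?_
  rw [(hd s (interior_subset hs)).deriv]
  linarith [hle s (interior_subset hs)]

end Monotonicity

section Fint

variable {f : ℝ → ℝ} {a s : ℝ}

theorem hasDerivAt_Fint (hint : IntegrableOn (fun τ => 1 / f τ) (Ioi a)) (has : a < s)
    (hc : ContinuousAt f s) (hfs : f s ≠ 0) : HasDerivAt (Fint f) (-(1 / f s)) s :=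
  hasDerivAt_setIntegral_Ioi hint has (continuousAt_const.div hc hfs)

theorem Fint_pos (hint : IntegrableOn (fun τ => 1 / f τ) (Ioi s))
    (hfpos : ∀ τ, s < τ → 0 < f τ) : 0 < Fint f s :=
  setIntegral_Ioi_pos hint fun τ hτ => one_div_pos.mpr (hfpos τ hτ)

theorem tendsto_Fint_nhdsGT_zero (hfpos : ∀ s, a < s → 0 < f s)
    (hfint : ∀ s, a < s → IntegrableOn (fun τ => 1 / f τ) (Ioi s)) :
    Tendsto (Fint f) atTop (𝓝[>] 0) :=
  tendsto_nhdsWithin_iff.mpr ⟨tendsto_integral_Ioi_zero tendsto_id,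
    (eventually_gt_atTop a).mono fun s hs =>
      Fint_pos (hfint s hs) fun τ hτ => hfpos τ (hs.trans hτ)⟩

end Fint

theorem stmt2_general (f : ℝ → ℝ) (s₀ B : ℝ)
    (hf : ContDiffOn ℝ 2 f (Set.Ioi s₀))
    (hfpos : ∀ s, s₀ < s → 0 < f s)
    (hfint : ∀ s, s₀ < s → IntegrableOn (fun τ => 1 / f τ) (Set.Ioi s))
    (hB : 1 ≤ B)
    (hf2a : Tendsto (fun s => deriv f s * Fint f s) atTop (nhds 1))
    (hf2b : Tendsto (fun s => invB2 f (Fint f) s) atTop (nhds (1 / B))) :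
    Tendsto (fun s => invB1 f (Fint f) s) atTop (nhds (1 / B))
    ∧ (∃ s₁ > s₀, (∀ s ≥ s₁, deriv f s * Fint f s ≤ 1)
        ∧ AntitoneOn (fun s => f s * Fint f s) (Set.Ici s₁))
    ∧ Tendsto (fun s => deriv f s * Fint f s) atTop (nhds 1) := by
  have hf' (s) (hs : s₀ < s) : HasDerivAt f (deriv f s) s :=
    ((hf.differentiableOn two_ne_zero).differentiableAt (Ioi_mem_nhds hs)).hasDerivAt
  have hf'' (s) (hs : s₀ < s) : HasDerivAt (deriv f) (deriv (deriv f) s) s :=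
    (((hf.deriv_of_isOpen isOpen_Ioi (by norm_num)).differentiableOn one_ne_zero).differentiableAt
      (Ioi_mem_nhds hs)).hasDerivAt
  have hF' (s) (hs : s₀ < s) : HasDerivAt (Fint f) (-(1 / f s)) s := by
    obtain ⟨a, hs₀a, has⟩ := exists_between hs
    exact hasDerivAt_Fint (hfint a hs₀a) has (hf' s hs).continuousAt (hfpos s hs).ne'
  have hFpos (s) (hs : s₀ < s) : 0 < Fint f s :=
    Fint_pos (hfint s hs) fun τ hτ => hfpos τ (hs.trans hτ)
  have hB2 : ∀ᶠ s in atTop, 0 < invB2 f (Fint f) s :=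
    hf2b.eventually_const_lt (one_div_pos.mpr (by linarith))
  obtain ⟨s₁, hs₁⟩ := ((eventually_gt_atTop s₀).and hB2).exists_forall_of_atTop
  have hs₁s₀ (s) (hs : s ∈ Ici s₁) : s₀ < s := (hs₁ s hs).1
  have hmono : StrictMonoOn (fun s => deriv f s * Fint f s) (Ici s₁) :=
    strictMonoOn_deriv_mul_of_invB2_pos (convex_Ici s₁) (fun s hs => hf'' s (hs₁s₀ s hs))
      (fun s hs => hF' s (hs₁s₀ s hs)) (fun s hs => hfpos s (hs₁s₀ s hs))
      (fun s hs => hFpos s (hs₁s₀ s hs)) fun s hs => (hs₁ s hs).2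
  have hle (s) (hs : s ≥ s₁) : deriv f s * Fint f s ≤ 1 :=
    ge_of_tendsto hf2a <| (eventually_ge_atTop s).mono fun t ht =>
      hmono.monotoneOn hs (le_trans hs ht) ht
  have hlarge := eventually_gt_atTop s₀
  refine ⟨tendsto_invB1_of_tendsto_invB2 (hlarge.mono hF') (tendsto_Fint_nhdsGT_zero hfpos hfint)
    (hlarge.mono hf'') (hlarge.mono fun s hs => (hfpos s hs).ne')
    (hB2.mono fun s hs => deriv_ne_zero_of_invB2_ne_zero hs.ne') hf2a hf2b,
    ⟨s₁, hs₁s₀ s₁ self_mem_Ici, hle, ?_⟩, hf2a⟩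
  exact antitoneOn_mul_of_deriv_mul_le_one (convex_Ici s₁) (fun s hs => hf' s (hs₁s₀ s hs))
    (fun s hs => hF' s (hs₁s₀ s hs)) (fun s hs => (hfpos s (hs₁s₀ s hs)).ne') hle

/-- Remark 1.3: under (f1), (f2), `1/B₁[f](s) → 1/B`, eventually `f'(s)F(s) ≤ 1`
(so `f·F` is non-increasing there), and `f'(s)F(s) → 1` as `s → ∞`. -/
theorem stmt2 (f : ℝ → ℝ) (s₀ B : ℝ) (hs₀ : 0 < s₀)
    (hf : ContDiffOn ℝ 2 f (Set.Ioi s₀))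
    (hfpos : ∀ s, s₀ < s → 0 < f s)
    (hf' : ∀ s, s₀ < s → 0 < deriv f s)
    (hfint : ∀ s, s₀ < s → IntegrableOn (fun τ => 1 / f τ) (Set.Ioi s))
    (hB : 1 ≤ B)
    (hf2a : Tendsto (fun s => deriv f s * Fint f s) atTop (nhds 1))
    (hf2b : Tendsto (fun s => invB2 f (Fint f) s) atTop (nhds (1 / B))) :
    Tendsto (fun s => invB1 f (Fint f) s) atTop (nhds (1 / B))
    ∧ (∃ s₁ > s₀, (∀ s ≥ s₁, deriv f s * Fint f s ≤ 1)
        ∧ AntitoneOn (fun s => f s * Fint f s) (Set.Ici s₁))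
    ∧ Tendsto (fun s => deriv f s * Fint f s) atTop (nhds 1) :=
  stmt2_general f s₀ B hf hfpos hfint hB hf2a hf2b
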